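/- arXiv:1912.05448 — 6 statements merged into one kernel-verified Lean document; each statement's English description precedes it below -/
import Mathlib

section
/- For any smooth positive function ρ : ℝ^d → ℝ, the identity (1/2) ρ ∇(Δ√ρ / √ρ) = (1/4) ∇Δρ − div(∇√ρ ⊗ ∇√ρ) holds pointwise. -/
open MeasureTheory

noncomputable section

/-- Partial derivative in the `i`-th coordinate direction. -/
def pd {d : ℕ} (i : Fin d) (f : EuclideanSpace ℝ (Fin d) → ℝ)
    (x : EuclideanSpace ℝ (Fin d)) : ℝ :=
  fderiv ℝ f x (EuclideanSpace.single i 1)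

/-- Laplacian. -/
def lap {d : ℕ} (f : EuclideanSpace ℝ (Fin d) → ℝ)
    (x : EuclideanSpace ℝ (Fin d)) : ℝ :=
  ∑ i, pd i (fun y => pd i f y) x

namespace BohmAux

variable {d : ℕ} {f g : EuclideanSpace ℝ (Fin d) → ℝ} {x : EuclideanSpace ℝ (Fin d)}

lemma contDiff_pd (hf : ContDiff ℝ (⊤ : ℕ∞) f) (i : Fin d) : ContDiff ℝ (⊤ : ℕ∞) (fun y => pd i f y) :=
  (hf.fderiv_right (by simp)).clm_apply contDiff_const

lemma pd_add (i : Fin d) (hf : DifferentiableAt ℝ f x) (hg : DifferentiableAt ℝ g x) :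
    pd i (fun y => f y + g y) x = pd i f x + pd i g x := by
  unfold pd; rw [fderiv_fun_add hf hg]; rfl

lemma pd_mul (i : Fin d) (hf : DifferentiableAt ℝ f x) (hg : DifferentiableAt ℝ g x) :
    pd i (fun y => f y * g y) x = pd i f x * g x + f x * pd i g x := by
  unfold pd; rw [fderiv_fun_mul hf hg]
  simp [smul_eq_mul]; ring

lemma pd_sum (i : Fin d) {F : Fin d → EuclideanSpace ℝ (Fin d) → ℝ}
    (h : ∀ j, DifferentiableAt ℝ (F j) x) :
    pd i (fun y => ∑ j, F j y) x = ∑ j, pd i (F j) x := by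
  unfold pd; rw [fderiv_fun_sum (fun j _ => h j)]
  simp

lemma pd_comm (hf : ContDiff ℝ (⊤ : ℕ∞) f) (i j : Fin d) :
    pd i (fun y => pd j f y) x = pd j (fun y => pd i f y) x := by
  have hd : DifferentiableAt ℝ (fderiv ℝ f) x :=
    ((hf.fderiv_right (m := (⊤ : ℕ∞)) (by simp)).differentiable (by simp)).differentiableAt
  have key : ∀ v w : EuclideanSpace ℝ (Fin d),
      fderiv ℝ (fun y => fderiv ℝ f y w) x v = fderiv ℝ (fderiv ℝ f) x v w := by
    intro v w
    have : (fun y => fderiv ℝ f y w)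
        = (ContinuousLinearMap.apply ℝ ℝ w) ∘ (fderiv ℝ f) := rfl
    rw [this, fderiv_comp x (ContinuousLinearMap.apply ℝ ℝ w).differentiableAt hd]
    simp
  have hsymm := ((hf.contDiffAt (x := x)).of_le
    (show (2 : WithTop ℕ∞) ≤ ((⊤ : ℕ∞) : WithTop ℕ∞) from WithTop.coe_le_coe.2 le_top)).isSymmSndFDerivAt (by simp)
  unfold pd
  rw [key, key, hsymm]

lemma key (s : EuclideanSpace ℝ (Fin d) → ℝ) (hs : ContDiff ℝ (⊤ : ℕ∞) s)
    (hp : ∀ y, 0 < s y) (x : EuclideanSpace ℝ (Fin d)) (i : Fin d) :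
    (1/2) * (s x * s x) * pd i (fun y => lap s y / s y) x
      = (1/4) * pd i (fun y => lap (fun z => s z * s z) y) x
        - ∑ j, pd j (fun y => pd i s y * pd j s y) x := by
  have hds : Differentiable ℝ s := hs.differentiable (by simp)
  have hP : ∀ j : Fin d, ContDiff ℝ (⊤ : ℕ∞) (fun y => pd j s y) := fun j => contDiff_pd hs j
  have hdP : ∀ (j : Fin d) y, DifferentiableAt ℝ (fun y' => pd j s y') y :=
    fun j y => ((hP j).differentiable (by simp)).differentiableAt
  have hPP : ∀ j k : Fin d, ContDiff ℝ (⊤ : ℕ∞) (fun y => pd k (fun z => pd j s z) y) :=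
    fun j k => contDiff_pd (hP j) k
  have hdPP : ∀ (j k : Fin d) y, DifferentiableAt ℝ (fun y' => pd k (fun z => pd j s z) y') y :=
    fun j k y => ((hPP j k).differentiable (by simp)).differentiableAt
  have hlapfun : (fun y => lap s y) = fun y => ∑ j, pd j (fun z => pd j s z) y := rfl
  have hlap : ContDiff ℝ (⊤ : ℕ∞) (fun y => lap s y) := by
    rw [hlapfun]; exact ContDiff.sum fun j _ => hPP j j
  have hdlap : ∀ y, DifferentiableAt ℝ (fun y' => lap s y') y :=
    fun y => (hlap.differentiable (by simp)).differentiableAt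
  have hq : DifferentiableAt ℝ (fun y => lap s y / s y) x := by
    simpa only [div_eq_mul_inv] using (hdlap x).fun_mul ((hds x).fun_inv (hp x).ne')
  -- Step 1
  have H1 : s x * pd i (fun y => lap s y) x
      = (s x * s x) * pd i (fun y => lap s y / s y) x + lap s x * pd i s x := by
    have hfun : (fun y => lap s y) = fun y => (lap s y / s y) * s y :=
      funext fun y => (div_mul_cancel₀ _ (hp y).ne').symm
    conv_lhs => rw [hfun]
    rw [pd_mul i hq (hds x)]
    have hsx : s x ≠ 0 := (hp x).ne'
    field_simp
  -- Step 2
  have hlapss : (fun y => lap (fun z => s z * s z) y)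
      = fun y => ∑ j, ((pd j (fun z => pd j s z) y * s y + pd j s y * pd j s y)
          + (pd j s y * pd j s y + s y * pd j (fun z => pd j s z) y)) := by
    funext y
    show ∑ j, pd j (fun z => pd j (fun w => s w * s w) z) y = _
    refine Finset.sum_congr rfl fun j _ => ?_
    have h1 : (fun z => pd j (fun w => s w * s w) z)
        = fun z => (pd j s z * s z + s z * pd j s z) :=
      funext fun z => pd_mul j (hds z) (hds z)
    rw [h1, pd_add j (((hdP j y).fun_mul (hds y))) ((hds y).fun_mul (hdP j y)),
      pd_mul j (hdP j y) (hds y), pd_mul j (hds y) (hdP j y)]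
  have hLi : pd i (fun y => lap s y) x
      = ∑ j, pd i (fun y => pd j (fun z => pd j s z) y) x := by
    conv_lhs => rw [hlapfun]
    exact pd_sum i fun j => hdPP j j x
  have hLx : lap s x = ∑ j, pd j (fun z => pd j s z) x := rfl
  have H2 : pd i (fun y => lap (fun z => s z * s z) y) x
      = 2 * (s x * pd i (fun y => lap s y) x) + 2 * (pd i s x * lap s x)
        + 4 * ∑ j, pd j s x * pd i (fun y => pd j s y) x := by
    rw [hlapss, pd_sum i (fun j =>
      (((hdPP j j x).fun_mul (hds x)).fun_add ((hdP j x).fun_mul (hdP j x))).fun_add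
        (((hdP j x).fun_mul (hdP j x)).fun_add ((hds x).fun_mul (hdPP j j x))))]
    rw [hLi, hLx]
    simp only [Finset.mul_sum]
    rw [← Finset.sum_add_distrib, ← Finset.sum_add_distrib]
    refine Finset.sum_congr rfl fun j _ => ?_
    rw [pd_add i (((hdPP j j x).fun_mul (hds x)).fun_add ((hdP j x).fun_mul (hdP j x)))
        (((hdP j x).fun_mul (hdP j x)).fun_add ((hds x).fun_mul (hdPP j j x))),
      pd_add i ((hdPP j j x).fun_mul (hds x)) ((hdP j x).fun_mul (hdP j x)),
      pd_add i ((hdP j x).fun_mul (hdP j x)) ((hds x).fun_mul (hdPP j j x)),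
      pd_mul i (hdPP j j x) (hds x), pd_mul i (hdP j x) (hdP j x),
      pd_mul i (hds x) (hdPP j j x)]
    ring
  -- Step 3
  have H3 : ∑ j, pd j (fun y => pd i s y * pd j s y) x
      = ∑ j, pd j s x * pd i (fun y => pd j s y) x + pd i s x * lap s x := by
    have hterm : ∀ j : Fin d, pd j (fun y => pd i s y * pd j s y) x
        = pd j s x * pd i (fun y => pd j s y) x
          + pd i s x * pd j (fun y => pd j s y) x := by
      intro j
      rw [pd_mul j (hdP i x) (hdP j x), pd_comm hs j i]
      ring
    rw [Finset.sum_congr rfl fun j _ => hterm j, Finset.sum_add_distrib]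
    congr 1
    rw [← Finset.mul_sum]
    rfl
  rw [H2, H3]
  linear_combination (-(1/2 : ℝ)) * H1

end BohmAux

/-- Bohm potential identity in divergence form: for smooth positive `ρ`,
`(1/2) ρ ∇(Δ√ρ/√ρ) = (1/4) ∇Δρ − div(∇√ρ ⊗ ∇√ρ)` pointwise (componentwise in `i`,
with the divergence of the matrix field taken row-wise). -/
theorem bohm_identity_divergence_form {d : ℕ}
    (ρ : EuclideanSpace ℝ (Fin d) → ℝ)
    (hρ : ContDiff ℝ (⊤ : ℕ∞) ρ) (hpos : ∀ x, 0 < ρ x)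
    (x : EuclideanSpace ℝ (Fin d)) (i : Fin d) :
    (1/2) * ρ x *
        pd i (fun y => lap (fun z => Real.sqrt (ρ z)) y / Real.sqrt (ρ y)) x
      = (1/4) * pd i (fun y => lap ρ y) x
        - ∑ j, pd j (fun y =>
            pd i (fun z => Real.sqrt (ρ z)) y * pd j (fun z => Real.sqrt (ρ z)) y) x := by
  have hsc : ContDiff ℝ (⊤ : ℕ∞) (fun z => Real.sqrt (ρ z)) := hρ.sqrt (fun z => (hpos z).ne')
  have hsp : ∀ y, 0 < Real.sqrt (ρ y) := fun y => Real.sqrt_pos.2 (hpos y)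
  have hρeq : ρ = fun z => Real.sqrt (ρ z) * Real.sqrt (ρ z) :=
    funext fun z => (Real.mul_self_sqrt (hpos z).le).symm
  have h2 : (fun y => lap ρ y)
      = (fun y => lap (fun z => Real.sqrt (ρ z) * Real.sqrt (ρ z)) y) := by
    funext y; conv_rhs => rw [← hρeq]
  have hx : ρ x = Real.sqrt (ρ x) * Real.sqrt (ρ x) := (Real.mul_self_sqrt (hpos x).le).symm
  rw [h2]
  conv_lhs => rw [hx]
  have := BohmAux.key (fun z => Real.sqrt (ρ z)) hsc hsp x i
  rw [mul_assoc] at this ⊢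
  exact this

end
end

section
/- Let ψ ∈ H¹(ℝ^d) and set √ρ := |ψ|. If φ ∈ L^∞(ℝ^d) satisfies ‖φ‖_{L^∞} ≤ 1 and √ρ · φ = ψ almost everywhere, then ∇√ρ = Re(φ̄ ∇ψ) almost everywhere and ∇√ρ ∈ L²(ℝ^d). -/
/-!
Where `ψ x ≠ 0`, the chain rule for `√(‖ψ‖²)` gives `∇|ψ| = ⟪ψ/|ψ|, ∇ψ⟫_ℝ = Re(conj(ψ/|ψ|) ∇ψ)`,
and `φ = ψ/|ψ|` there. Where `ψ x = 0`, `|ψ|` has a minimum, so `∇|ψ| = 0`; and `∇ψ = 0` at almost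
every point of the zero set, because at a Lebesgue density point of a level set of a differentiable
map every directional derivative vanishes. So the formula holds a.e. whatever `φ` is on the zero set,
and `|φ| ≤ 1` gives `|∇|ψ|| ≤ |∇ψ|`, whence the `L²` bound.
-/

open MeasureTheory Complex

noncomputable section

def pdc {d : ℕ} (i : Fin d) (f : EuclideanSpace ℝ (Fin d) → ℂ)
    (x : EuclideanSpace ℝ (Fin d)) : ℂ :=
  fderiv ℝ f x (EuclideanSpace.single i 1)

section ZeroSet

variable {E F : Type*} [NormedAddCommGroup E] [NormedSpace ℝ E] [FiniteDimensional ℝ E]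
  [MeasurableSpace E] [BorelSpace E] (μ : Measure E) [μ.IsAddHaarMeasure]
  [NormedAddCommGroup F] [NormedSpace ℝ F] [FiniteDimensional ℝ F]

theorem ae_restrict_fderiv_eq_zero_of_forall_eq_real {f : E → ℝ} (hf : Differentiable ℝ f)
    {s : Set E} (hs : MeasurableSet s) {c : ℝ} (hc : ∀ x ∈ s, f x = c) :
    ∀ᵐ x ∂μ.restrict s, fderiv ℝ f x = 0 := by
  rcases subsingleton_or_nontrivial E with _ | _
  · exact Filter.Eventually.of_forall fun x => ContinuousLinearMap.ext fun w => by
      simp [Subsingleton.elim w 0]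
  obtain ⟨v, hv⟩ := exists_ne (0 : E)
  -- `y ↦ f y • v` maps `E` to itself and is constant on `s`, so the Jacobian estimate
  -- `ApproximatesLinearOn.norm_fderiv_sub_le` with `A = 0`, `δ = 0` applies to it.
  have hg : ∀ x, HasFDerivAt (fun y => f y • v) ((fderiv ℝ f x).smulRight v) x :=
    fun x => (hf x).hasFDerivAt.smul_const v
  have happrox : ApproximatesLinearOn (fun y => f y • v) (0 : E →L[ℝ] E) s 0 := by
    intro x hx y hy
    simp [hc x hx, hc y hy]
  filter_upwards [happrox.norm_fderiv_sub_le μ hs _ fun x _ => (hg x).hasFDerivWithinAt]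
    with x hx
  simpa [hv] using hx

theorem ae_restrict_fderiv_eq_zero_of_forall_eq {f : E → F} (hf : Differentiable ℝ f)
    {s : Set E} (hs : MeasurableSet s) {c : F} (hc : ∀ x ∈ s, f x = c) :
    ∀ᵐ x ∂μ.restrict s, fderiv ℝ f x = 0 := by
  have hdual : ∀ ℓ : F →L[ℝ] ℝ, ∀ᵐ x ∂μ.restrict s, ℓ.comp (fderiv ℝ f x) = 0 := fun ℓ => by
    filter_upwards [ae_restrict_fderiv_eq_zero_of_forall_eq_real μ (ℓ.differentiable.comp hf) hs
      (c := ℓ c) fun x hx => by simp [hc x hx]] with x hx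
    rwa [fderiv_comp x ℓ.differentiableAt (hf x), ℓ.fderiv] at hx
  let b := Module.finBasis ℝ F
  filter_upwards [ae_all_iff.2 fun i => hdual (LinearMap.toContinuousLinearMap (b.coord i))]
    with x hx
  ext w
  refine b.forall_coord_eq_zero_iff.1 fun i => ?_
  simpa using congr($(hx i) w)

theorem ae_fderiv_eq_zero_of_eq_zero {f : E → F} (hf : Differentiable ℝ f) :
    ∀ᵐ x ∂μ, f x = 0 → fderiv ℝ f x = 0 := by
  have hs : MeasurableSet (f ⁻¹' {0}) := (isClosed_singleton.preimage hf.continuous).measurableSet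
  exact ae_imp_of_ae_restrict (ae_restrict_fderiv_eq_zero_of_forall_eq μ hf hs fun _ hx => hx)

end ZeroSet

section Norm

variable {E F : Type*} [NormedAddCommGroup E] [NormedSpace ℝ E]
  [NormedAddCommGroup F] [InnerProductSpace ℝ F]

theorem fderiv_norm_comp_eq_innerSL_comp {f : E → F} {x : E} {u : F}
    (hf : DifferentiableAt ℝ f x) (hu : ‖f x‖ • u = f x) (h0 : f x = 0 → fderiv ℝ f x = 0) :
    fderiv ℝ (fun y => ‖f y‖) x = (innerSL ℝ u).comp (fderiv ℝ f x) := by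
  by_cases hfx : f x = 0
  · have hmin : IsLocalMin (fun y => ‖f y‖) x :=
      Filter.Eventually.of_forall fun y => by simp [hfx]
    rw [hmin.fderiv_eq_zero, h0 hfx, ContinuousLinearMap.comp_zero]
  have hnorm : (fun y => ‖f y‖) = fun y => √(‖f y‖ ^ 2) := by
    funext y
    rw [Real.sqrt_sq (norm_nonneg _)]
  rw [hnorm, (hf.hasFDerivAt.norm_sq.sqrt (by positivity)).fderiv]
  have hinner : ∀ v, inner ℝ (f x) v = ‖f x‖ * inner ℝ u v := fun v => by
    conv_lhs => rw [← hu]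
    exact real_inner_smul_left _ _ _
  ext w
  simp only [Real.sqrt_sq (norm_nonneg _), one_div, mul_inv_rev, smul_apply,
    ContinuousLinearMap.comp_apply, coe_innerSL_apply, hinner, nsmul_eq_mul, Nat.cast_ofNat,
    smul_eq_mul]
  field_simp

end Norm

theorem EuclideanSpace.gradient_apply {ι : Type*} [Fintype ι] [DecidableEq ι]
    (g : EuclideanSpace ℝ ι → ℝ) (x : EuclideanSpace ℝ ι) (i : ι) :
    gradient g x i = fderiv ℝ g x (EuclideanSpace.single i 1) := by
  rw [← InnerProductSpace.toDual_symm_apply, real_inner_comm, EuclideanSpace.inner_single_left]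
  simp [gradient]

theorem MeasureTheory.MemLp.gradient {F : Type*} [NormedAddCommGroup F] [InnerProductSpace ℝ F]
    [CompleteSpace F] [MeasurableSpace F] {μ : Measure F} {p : ENNReal} {g : F → ℝ}
    (hg : MemLp (fderiv ℝ g) p μ) : MemLp (gradient g) p μ :=
  (InnerProductSpace.toDual ℝ F).symm.toContinuousLinearEquiv.toContinuousLinearMap.comp_memLp' hg

theorem polar_factorization_gradient_abs_general {d : ℕ}
    (ψ φ : EuclideanSpace ℝ (Fin d) → ℂ)
    (hψdiff : Differentiable ℝ ψ)
    (hgradL2 : MemLp (fun x => fderiv ℝ ψ x) 2 volume)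
    (hφ : ∀ᵐ x ∂volume, ‖φ x‖ ≤ 1)
    (hpolar : ∀ᵐ x ∂volume, (‖ψ x‖ : ℂ) * φ x = ψ x) :
    (∀ᵐ x ∂volume, ∀ i : Fin d,
        pd i (fun y => ‖ψ y‖) x = ((starRingEnd ℂ) (φ x) * pdc i ψ x).re)
    ∧ MemLp (fun x => (WithLp.toLp 2 (fun i => pd i (fun y => ‖ψ y‖) x) :
        EuclideanSpace ℝ (Fin d))) 2 volume := by
  have hderiv : ∀ᵐ x ∂volume,
      fderiv ℝ (fun y => ‖ψ y‖) x = (innerSL ℝ (φ x)).comp (fderiv ℝ ψ x) := by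
    filter_upwards [ae_fderiv_eq_zero_of_eq_zero volume hψdiff, hpolar] with x hzero hx
    exact fderiv_norm_comp_eq_innerSL_comp (hψdiff x) (by rwa [Complex.real_smul]) hzero
  refine ⟨?_, ?_⟩
  · filter_upwards [hderiv] with x hx i
    rw [pd, pdc, hx, ContinuousLinearMap.comp_apply, innerSL_apply_apply, Complex.inner, mul_comm]
  have hnorm : MemLp (fderiv ℝ fun y => ‖ψ y‖) 2 volume := by
    refine hgradL2.of_le (measurable_fderiv ℝ _).aestronglyMeasurable ?_
    filter_upwards [hderiv, hφ] with x hx hφx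
    rw [hx]
    calc ‖(innerSL ℝ (φ x)).comp (fderiv ℝ ψ x)‖
        ≤ ‖innerSL ℝ (φ x)‖ * ‖fderiv ℝ ψ x‖ := ContinuousLinearMap.opNorm_comp_le _ _
      _ = ‖φ x‖ * ‖fderiv ℝ ψ x‖ := by rw [innerSL_apply_norm]
      _ ≤ ‖fderiv ℝ ψ x‖ := mul_le_of_le_one_left (norm_nonneg _) hφx
  have hgrad : (fun x => (WithLp.toLp 2 (fun i => pd i (fun y => ‖ψ y‖) x) :
      EuclideanSpace ℝ (Fin d))) = gradient fun y => ‖ψ y‖ := by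
    ext x i
    rw [EuclideanSpace.gradient_apply, PiLp.toLp_apply, pd]
  exact hgrad ▸ hnorm.gradient

/-- Polar factorization, first part: if `ψ ∈ H¹(ℝ^d)`, `√ρ := |ψ|` and `φ` is a
polar factor of `ψ` (`‖φ‖_∞ ≤ 1` and `|ψ|·φ = ψ` a.e.), then
`∇√ρ = Re(φ̄ ∇ψ)` a.e. and `∇√ρ ∈ L²(ℝ^d)`. -/
theorem polar_factorization_gradient_abs {d : ℕ}
    (ψ φ : EuclideanSpace ℝ (Fin d) → ℂ)
    (hψdiff : Differentiable ℝ ψ)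
    (hψL2 : MemLp ψ 2 volume)
    (hgradL2 : MemLp (fun x => fderiv ℝ ψ x) 2 volume)
    (hφmeas : AEStronglyMeasurable φ volume)
    (hφ : ∀ᵐ x ∂volume, ‖φ x‖ ≤ 1)
    (hpolar : ∀ᵐ x ∂volume, (‖ψ x‖ : ℂ) * φ x = ψ x) :
    (∀ᵐ x ∂volume, ∀ i : Fin d,
        pd i (fun y => ‖ψ y‖) x = ((starRingEnd ℂ) (φ x) * pdc i ψ x).re)
    ∧ MemLp (fun x => (WithLp.toLp 2 (fun i => pd i (fun y => ‖ψ y‖) x) :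
        EuclideanSpace ℝ (Fin d))) 2 volume :=
  polar_factorization_gradient_abs_general ψ φ hψdiff hgradL2 hφ hpolar

end
end

section
/- If ψ_n → ψ in H¹(ℝ^d), then with √ρ_n := |ψ_n|, Λ_n := Im(φ̄_n ∇ψ_n) (φ_n a polar factor of ψ_n) and similarly √ρ := |ψ|, Λ := Im(φ̄∇ψ), one has ∇√ρ_n → ∇√ρ and Λ_n → Λ strongly in L²(ℝ^d). -/
/-!
Off the zero set of `ψ` a polar factor is forced to be `ψ / |ψ|`, and on the zero set `∇ψ`
vanishes almost everywhere: at a Lebesgue density point of `{ψ = 0}` the tangent cone is the whole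
space, while `ψ` is constant on that set. Hence `φ̄ ∇ψ = conj (ψ / |ψ|) ∇ψ` a.e., and both `∇√ρ` and
`Λ` are the real and imaginary parts of this single complex gradient. Its increment splits as
`conj (ψₙ / |ψₙ|) (∇ψₙ - ∇ψ) + conj (ψₙ / |ψₙ| - ψ / |ψ|) ∇ψ`. The first term is bounded by
`|∇ψₙ - ∇ψ|`. The second is dominated by `2 |∇ψ|` and tends to `0` a.e. along any subsequence on
which `ψₙ → ψ` a.e. (the phase is continuous off `0`, and `∇ψ = 0` a.e. where `ψ = 0`), so
dominated convergence and the subsequence principle give its `L²` convergence.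
-/

open MeasureTheory Complex Filter Topology

noncomputable section

/-- Hydrodynamic quantity `∇√ρ = Re(φ̄∇ψ)` associated to a wave function `ψ`
with polar factor `φ`. -/
def gradSqrtRho {d : ℕ} (ψ φ : EuclideanSpace ℝ (Fin d) → ℂ)
    (x : EuclideanSpace ℝ (Fin d)) : EuclideanSpace ℝ (Fin d) :=
  WithLp.toLp 2 (fun i => ((starRingEnd ℂ) (φ x) * pdc i ψ x).re)

/-- Hydrodynamic quantity `Λ = Im(φ̄∇ψ)`. -/
def lambdaHyd {d : ℕ} (ψ φ : EuclideanSpace ℝ (Fin d) → ℂ)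
    (x : EuclideanSpace ℝ (Fin d)) : EuclideanSpace ℝ (Fin d) :=
  WithLp.toLp 2 (fun i => ((starRingEnd ℂ) (φ x) * pdc i ψ x).im)

open Metric Set ComplexConjugate
open scoped ENNReal

-- The canonical polar factor of `z`; it is `0` at `z = 0` through the convention `0 / 0 = 0`.
def unitPhase (z : ℂ) : ℂ := z / ‖z‖

theorem norm_unitPhase_le (z : ℂ) : ‖unitPhase z‖ ≤ 1 := by
  rw [unitPhase, norm_div, Complex.norm_real, norm_norm]
  exact div_self_le_one _

theorem norm_unitPhase_sub_unitPhase_le (z w : ℂ) : ‖unitPhase z - unitPhase w‖ ≤ 2 :=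
  (norm_sub_le _ _).trans (by linarith [norm_unitPhase_le z, norm_unitPhase_le w])

theorem measurable_unitPhase : Measurable unitPhase :=
  measurable_id.div (Complex.measurable_ofReal.comp measurable_norm)

theorem continuousAt_unitPhase {z : ℂ} (hz : z ≠ 0) : ContinuousAt unitPhase z :=
  continuousAt_id.div (Complex.continuous_ofReal.comp continuous_norm).continuousAt
    (by simpa using hz)

theorem eq_unitPhase_of_norm_mul_eq {z w : ℂ} (hz : z ≠ 0) (h : (‖z‖ : ℂ) * w = z) :
    w = unitPhase z :=
  eq_div_of_mul_eq (by simpa using hz) (by rw [mul_comm, h])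

theorem MeasureTheory.AEStronglyMeasurable.unitPhase {α : Type*} [MeasurableSpace α]
    {μ : Measure α} {f : α → ℂ} (hf : AEStronglyMeasurable f μ) :
    AEStronglyMeasurable (fun x => unitPhase (f x)) μ :=
  (measurable_unitPhase.comp_aemeasurable hf.aemeasurable).aestronglyMeasurable

theorem tendsto_eLpNorm_of_dominated {α V : Type*} [MeasurableSpace α] {μ : Measure α}
    [NormedAddCommGroup V] {p : ℝ≥0∞} (hp0 : p ≠ 0) (hp : p ≠ ∞) {F : ℕ → α → V}
    {bound : α → ℝ} (hF : ∀ n, AEStronglyMeasurable (F n) μ) (hbound : MemLp bound p μ)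
    (h_bound : ∀ n, ∀ᵐ x ∂μ, ‖F n x‖ ≤ bound x)
    (h_lim : ∀ᵐ x ∂μ, Tendsto (fun n => F n x) atTop (𝓝 0)) :
    Tendsto (fun n => eLpNorm (F n) p μ) atTop (𝓝 0) := by
  have hp_pos : 0 < p.toReal := ENNReal.toReal_pos hp0 hp
  have hrpow : Tendsto (fun t : ℝ≥0∞ => t ^ p.toReal) (𝓝 0) (𝓝 0) := by
    simpa [ENNReal.zero_rpow_of_pos hp_pos] using
      (ENNReal.continuous_rpow_const (y := p.toReal)).tendsto 0
  have hlintegral : Tendsto (fun n => ∫⁻ x, ‖F n x‖ₑ ^ p.toReal ∂μ) atTop (𝓝 0) := by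
    simpa using tendsto_lintegral_of_dominated_convergence' (f := 0)
      (fun x => ‖bound x‖ₑ ^ p.toReal) (fun n => (hF n).enorm.pow_const p.toReal)
      (fun n => (h_bound n).mono fun x hx => ENNReal.rpow_le_rpow
        (enorm_le_iff_norm_le.2 (hx.trans (Real.le_norm_self _))) hp_pos.le)
      (lintegral_rpow_enorm_lt_top_of_eLpNorm_lt_top hp0 hp hbound.eLpNorm_lt_top).ne
      (h_lim.mono fun x hx => hrpow.comp (by simpa using hx.enorm))
  simp_rw [eLpNorm_eq_lintegral_rpow_enorm_toReal hp0 hp]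
  have hroot := ((ENNReal.continuous_rpow_const (y := 1 / p.toReal)).tendsto 0).comp hlintegral
  rwa [ENNReal.zero_rpow_of_pos (one_div_pos.2 hp_pos)] at hroot

theorem tendsto_eLpNorm_unitPhase_sub_smul {α V : Type*} [MeasurableSpace α] {μ : Measure α}
    [NormedAddCommGroup V] [NormedSpace ℂ V] {p : ℝ≥0∞} (hp0 : p ≠ 0) (hp : p ≠ ∞)
    {f : ℕ → α → ℂ} {f₀ : α → ℂ} {g : α → V} (hf : ∀ n, AEStronglyMeasurable (f n) μ)
    (hf₀ : AEStronglyMeasurable f₀ μ) (hg : MemLp g p μ) (hg₀ : ∀ᵐ x ∂μ, f₀ x = 0 → g x = 0)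
    (hconv : TendstoInMeasure μ f atTop f₀) :
    Tendsto (fun n => eLpNorm (fun x => (unitPhase (f n x) - unitPhase (f₀ x)) • g x) p μ)
      atTop (𝓝 0) := by
  refine tendsto_of_subseq_tendsto fun ns hns => ?_
  obtain ⟨ms, -, hms⟩ := (hconv.comp hns).exists_seq_tendsto_ae
  refine ⟨ms, tendsto_eLpNorm_of_dominated hp0 hp
    (fun _ => ((hf _).unitPhase.sub hf₀.unitPhase).smul hg.1)
    (hg.norm.const_mul 2) (fun k => ae_of_all _ fun x => ?_) ?_⟩
  · rw [norm_smul]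
    gcongr
    exact norm_unitPhase_sub_unitPhase_le _ _
  · filter_upwards [hms, hg₀] with x hx hx₀
    by_cases hfx : f₀ x = 0
    · simp [hx₀ hfx]
    · simpa using (((continuousAt_unitPhase hfx).tendsto.comp hx).sub_const
        (unitPhase (f₀ x))).smul_const (g x)

theorem norm_conj_smul_sub_conj_smul_le {V : Type*} [NormedAddCommGroup V] [NormedSpace ℂ V]
    {a b : ℂ} (ha : ‖a‖ ≤ 1) (u v : V) :
    ‖conj a • u - conj b • v‖ ≤ ‖u - v‖ + ‖(a - b) • v‖ := by
  have hsplit : conj a • u - conj b • v = conj a • (u - v) + conj (a - b) • v := by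
    rw [map_sub, smul_sub, sub_smul]; abel
  calc ‖conj a • u - conj b • v‖ ≤ ‖conj a • (u - v)‖ + ‖conj (a - b) • v‖ := by
        rw [hsplit]; exact norm_add_le _ _
    _ ≤ ‖u - v‖ + ‖(a - b) • v‖ := by
        simp only [norm_smul, Complex.norm_conj]
        gcongr
        exact mul_le_of_le_one_left (norm_nonneg _) ha

section Haar

variable {E F : Type*} [NormedAddCommGroup E] [NormedSpace ℝ E] [FiniteDimensional ℝ E]
  [MeasurableSpace E] [BorelSpace E] (μ : Measure E) [μ.IsAddHaarMeasure]
  [NormedAddCommGroup F] [NormedSpace ℝ F]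

theorem tangentConeAt_eq_univ_of_density_one {s : Set E} {x : E}
    (h : Tendsto (fun r => μ (s ∩ closedBall x r) / μ (closedBall x r)) (𝓝[>] 0) (𝓝 1)) :
    tangentConeAt ℝ s x = univ := by
  refine eq_univ_of_forall fun z => mem_tangentConeAt_of_frequently (𝓝[>] (0 : ℝ) ×ˢ 𝓝 z)
    (fun p => p.1⁻¹) (fun p => p.1 • p.2) ?_ ?_ ?_
  · simpa using ((continuous_smul.tendsto ((0 : ℝ), z)).mono_left
      ((Filter.prod_mono nhdsWithin_le_nhds le_rfl).trans_eq (nhds_prod_eq).symm))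
  · rw [((nhdsGT_basis (0 : ℝ)).prod nhds_basis_ball).frequently_iff]
    rintro ⟨δ, ε⟩ ⟨hδ, hε⟩
    -- a density point sees `s` in every small rescaled copy `x + r • closedBall z (ε / 2)`
    obtain ⟨r, ⟨y, hys, hy⟩, hr⟩ :=
      ((Measure.eventually_nonempty_inter_smul_of_density_one μ s x h (closedBall z (ε / 2))
        measurableSet_closedBall (measure_closedBall_pos μ z (half_pos hε)).ne').and
        (Ioo_mem_nhdsGT hδ)).exists
    obtain ⟨_, rfl, _, ⟨w, hw, rfl⟩, rfl⟩ := hy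
    exact ⟨(r, w), ⟨hr, closedBall_subset_ball (half_lt_self hε) hw⟩, hys⟩
  · refine tendsto_snd.congr' ?_
    filter_upwards [prod_mem_prod self_mem_nhdsWithin univ_mem] with p hp
    simp [smul_smul, inv_mul_cancel₀ (ne_of_gt (show 0 < p.1 from hp.1))]

theorem ae_fderiv_eq_zero_of_eq (f : E → F) (c : F) :
    ∀ᵐ x ∂μ, f x = c → fderiv ℝ f x = 0 := by
  filter_upwards [ae_imp_of_ae_restrict (Besicovitch.ae_tendsto_measure_inter_div μ (f ⁻¹' {c}))]
    with x hdensity hfx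
  by_cases hf : DifferentiableAt ℝ f x
  · have hunique : UniqueDiffWithinAt ℝ (f ⁻¹' {c}) x :=
      ⟨by simp [tangentConeAt_eq_univ_of_density_one μ (hdensity hfx)], subset_closure hfx⟩
    exact hunique.eq hf.hasFDerivAt.hasFDerivWithinAt
      ((hasFDerivWithinAt_const c x _).congr (fun _ hy => hy) hfx)
  · exact fderiv_zero_of_not_differentiableAt hf

theorem ae_conj_smul_fderiv_eq_of_polar {ψ φ : E → ℂ}
    (hpolar : ∀ᵐ x ∂μ, (‖ψ x‖ : ℂ) * φ x = ψ x) :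
    ∀ᵐ x ∂μ, conj (φ x) • fderiv ℝ ψ x = conj (unitPhase (ψ x)) • fderiv ℝ ψ x := by
  filter_upwards [hpolar, ae_fderiv_eq_zero_of_eq μ ψ 0] with x hφ hDψ
  by_cases hψ : ψ x = 0
  · rw [hDψ hψ]
    ext
    simp
  · rw [eq_unitPhase_of_norm_mul_eq hψ hφ]

theorem tendsto_eLpNorm_conj_smul_fderiv_sub {p : ℝ≥0∞} (hp1 : 1 ≤ p) (hp : p ≠ ∞)
    {ψn φn : ℕ → E → ℂ} {ψ φ : E → ℂ} (hψn : ∀ n, AEStronglyMeasurable (ψn n) μ)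
    (hψ : AEStronglyMeasurable ψ μ) (hDψ : MemLp (fderiv ℝ ψ) p μ)
    (hpolarn : ∀ n, ∀ᵐ x ∂μ, (‖ψn n x‖ : ℂ) * φn n x = ψn n x)
    (hpolar : ∀ᵐ x ∂μ, (‖ψ x‖ : ℂ) * φ x = ψ x) (hconv : TendstoInMeasure μ ψn atTop ψ)
    (hconvD : Tendsto (fun n => eLpNorm (fun x => fderiv ℝ (ψn n) x - fderiv ℝ ψ x) p μ)
      atTop (𝓝 0)) :
    Tendsto (fun n => eLpNorm
      (fun x => conj (φn n x) • fderiv ℝ (ψn n) x - conj (φ x) • fderiv ℝ ψ x) p μ)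
      atTop (𝓝 0) := by
  have hp0 : p ≠ 0 := (zero_lt_one.trans_le hp1).ne'
  have hB := tendsto_eLpNorm_unitPhase_sub_smul hp0 hp hψn hψ hDψ
    (ae_fderiv_eq_zero_of_eq μ ψ 0) hconv
  have hle : ∀ n, eLpNorm (fun x => conj (φn n x) • fderiv ℝ (ψn n) x
      - conj (φ x) • fderiv ℝ ψ x) p μ ≤
      eLpNorm (fun x => fderiv ℝ (ψn n) x - fderiv ℝ ψ x) p μ +
      eLpNorm (fun x => (unitPhase (ψn n x) - unitPhase (ψ x)) • fderiv ℝ ψ x) p μ := by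
    intro n
    calc _ ≤ eLpNorm (fun x => ‖fderiv ℝ (ψn n) x - fderiv ℝ ψ x‖ +
          ‖(unitPhase (ψn n x) - unitPhase (ψ x)) • fderiv ℝ ψ x‖) p μ := by
          refine eLpNorm_mono_ae_real ?_
          filter_upwards [ae_conj_smul_fderiv_eq_of_polar μ (hpolarn n),
            ae_conj_smul_fderiv_eq_of_polar μ hpolar] with x hxn hx
          rw [hxn, hx]
          exact norm_conj_smul_sub_conj_smul_le (norm_unitPhase_le _) _ _
      _ ≤ eLpNorm (fun x => ‖fderiv ℝ (ψn n) x - fderiv ℝ ψ x‖) p μ +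
          eLpNorm (fun x => ‖(unitPhase (ψn n x) - unitPhase (ψ x)) • fderiv ℝ ψ x‖) p μ :=
          eLpNorm_add_le
            ((measurable_fderiv ℝ _).aestronglyMeasurable.sub
              (measurable_fderiv ℝ _).aestronglyMeasurable).norm
            (((hψn n).unitPhase.sub hψ.unitPhase).smul hDψ.1).norm hp1
      _ = _ := by rw [eLpNorm_norm, eLpNorm_norm]
  exact tendsto_of_tendsto_of_tendsto_of_le_of_le tendsto_const_nhds
    (by simpa using hconvD.add hB) (fun _ => zero_le) hle

end Haar

theorem norm_toLp_apply_single {ι : Type*} [Fintype ι] [DecidableEq ι]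
    (f : StrongDual ℝ (EuclideanSpace ℝ ι)) :
    ‖WithLp.toLp 2 (fun i => f (EuclideanSpace.single i 1))‖ = ‖f‖ := by
  have hdual : WithLp.toLp 2 (fun i => f (EuclideanSpace.single i 1)) =
      (InnerProductSpace.toDual ℝ _).symm f := by
    ext i
    rw [PiLp.toLp_apply,
      ← InnerProductSpace.toDual_symm_apply (x := EuclideanSpace.single i 1) (y := f),
      real_inner_comm, EuclideanSpace.inner_single_left]
    simp
  rw [hdual, LinearIsometryEquiv.norm_map]

section Hydrodynamic

variable {d : ℕ} (ψ φ ψ' φ' : EuclideanSpace ℝ (Fin d) → ℂ) (x : EuclideanSpace ℝ (Fin d))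

theorem norm_gradSqrtRho_sub_le :
    ‖gradSqrtRho ψ φ x - gradSqrtRho ψ' φ' x‖ ≤
      ‖conj (φ x) • fderiv ℝ ψ x - conj (φ' x) • fderiv ℝ ψ' x‖ := by
  have h : gradSqrtRho ψ φ x - gradSqrtRho ψ' φ' x = WithLp.toLp 2 (fun i =>
      (reCLM ∘L (conj (φ x) • fderiv ℝ ψ x - conj (φ' x) • fderiv ℝ ψ' x))
        (EuclideanSpace.single i 1)) := by
    ext i
    simp [gradSqrtRho, pdc]
  rw [h, norm_toLp_apply_single]
  exact (ContinuousLinearMap.opNorm_comp_le _ _).trans (by rw [reCLM_norm, one_mul])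

theorem norm_lambdaHyd_sub_le :
    ‖lambdaHyd ψ φ x - lambdaHyd ψ' φ' x‖ ≤
      ‖conj (φ x) • fderiv ℝ ψ x - conj (φ' x) • fderiv ℝ ψ' x‖ := by
  have h : lambdaHyd ψ φ x - lambdaHyd ψ' φ' x = WithLp.toLp 2 (fun i =>
      (imCLM ∘L (conj (φ x) • fderiv ℝ ψ x - conj (φ' x) • fderiv ℝ ψ' x))
        (EuclideanSpace.single i 1)) := by
    ext i
    simp [lambdaHyd, pdc]
  rw [h, norm_toLp_apply_single]
  exact (ContinuousLinearMap.opNorm_comp_le _ _).trans (by rw [imCLM_norm, one_mul])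

end Hydrodynamic

theorem polar_factorization_stability_general {d : ℕ}
    (ψn : ℕ → EuclideanSpace ℝ (Fin d) → ℂ) (ψ : EuclideanSpace ℝ (Fin d) → ℂ)
    (φn : ℕ → EuclideanSpace ℝ (Fin d) → ℂ) (φ : EuclideanSpace ℝ (Fin d) → ℂ)
    (hψndiff : ∀ n, Differentiable ℝ (ψn n)) (hψdiff : Differentiable ℝ ψ)
    (hgradL2 : MemLp (fun x => fderiv ℝ ψ x) 2 volume)
    (hpolarn : ∀ n, ∀ᵐ x ∂volume, (‖ψn n x‖ : ℂ) * φn n x = ψn n x)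
    (hpolar : ∀ᵐ x ∂volume, (‖ψ x‖ : ℂ) * φ x = ψ x)
    (hconvL2 : Tendsto (fun n => eLpNorm (fun x => ψn n x - ψ x) 2 volume) atTop (𝓝 0))
    (hconvgrad : Tendsto (fun n =>
        eLpNorm (fun x => fderiv ℝ (ψn n) x - fderiv ℝ ψ x) 2 volume) atTop (𝓝 0)) :
    Tendsto (fun n =>
        eLpNorm (fun x => gradSqrtRho (ψn n) (φn n) x - gradSqrtRho ψ φ x) 2 volume)
      atTop (𝓝 0)
    ∧ Tendsto (fun n =>
        eLpNorm (fun x => lambdaHyd (ψn n) (φn n) x - lambdaHyd ψ φ x) 2 volume)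
      atTop (𝓝 0) := by
  have hψn n := (hψndiff n).continuous.aestronglyMeasurable (μ := volume)
  have hψ := hψdiff.continuous.aestronglyMeasurable (μ := volume)
  have hconv : TendstoInMeasure volume ψn atTop ψ :=
    tendstoInMeasure_of_tendsto_eLpNorm two_ne_zero hψn hψ hconvL2
  have hG := tendsto_eLpNorm_conj_smul_fderiv_sub volume one_le_two ENNReal.ofNat_ne_top hψn hψ
    hgradL2 hpolarn hpolar hconv hconvgrad
  exact ⟨tendsto_of_tendsto_of_tendsto_of_le_of_le tendsto_const_nhds hG (fun _ => zero_le)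
      fun _ => eLpNorm_mono fun x => norm_gradSqrtRho_sub_le _ _ _ _ x,
    tendsto_of_tendsto_of_tendsto_of_le_of_le tendsto_const_nhds hG (fun _ => zero_le)
      fun _ => eLpNorm_mono fun x => norm_lambdaHyd_sub_le _ _ _ _ x⟩

/-- Stability of the polar factorization: if `ψ_n → ψ` in `H¹(ℝ^d)`, then the
hydrodynamic quantities converge strongly in `L²`:
`∇√ρ_n → ∇√ρ` and `Λ_n → Λ`. -/
theorem polar_factorization_stability {d : ℕ}
    (ψn : ℕ → EuclideanSpace ℝ (Fin d) → ℂ) (ψ : EuclideanSpace ℝ (Fin d) → ℂ)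
    (φn : ℕ → EuclideanSpace ℝ (Fin d) → ℂ) (φ : EuclideanSpace ℝ (Fin d) → ℂ)
    (hψndiff : ∀ n, Differentiable ℝ (ψn n)) (hψdiff : Differentiable ℝ ψ)
    (hψnL2 : ∀ n, MemLp (ψn n) 2 volume) (hψL2 : MemLp ψ 2 volume)
    (hgradnL2 : ∀ n, MemLp (fun x => fderiv ℝ (ψn n) x) 2 volume)
    (hgradL2 : MemLp (fun x => fderiv ℝ ψ x) 2 volume)
    (hφn : ∀ n, ∀ᵐ x ∂volume, ‖φn n x‖ ≤ 1)
    (hφ : ∀ᵐ x ∂volume, ‖φ x‖ ≤ 1)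
    (hpolarn : ∀ n, ∀ᵐ x ∂volume, (‖ψn n x‖ : ℂ) * φn n x = ψn n x)
    (hpolar : ∀ᵐ x ∂volume, (‖ψ x‖ : ℂ) * φ x = ψ x)
    (hconvL2 : Tendsto (fun n => eLpNorm (fun x => ψn n x - ψ x) 2 volume) atTop (𝓝 0))
    (hconvgrad : Tendsto (fun n =>
        eLpNorm (fun x => fderiv ℝ (ψn n) x - fderiv ℝ ψ x) 2 volume) atTop (𝓝 0)) :
    Tendsto (fun n =>
        eLpNorm (fun x => gradSqrtRho (ψn n) (φn n) x - gradSqrtRho ψ φ x) 2 volume)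
      atTop (𝓝 0)
    ∧ Tendsto (fun n =>
        eLpNorm (fun x => lambdaHyd (ψn n) (φn n) x - lambdaHyd ψ φ x) 2 volume)
      atTop (𝓝 0) :=
  polar_factorization_stability_general ψn ψ φn φ hψndiff hψdiff hgradL2 hpolarn hpolar hconvL2
    hconvgrad

end
end

section
/- Let ψ ∈ H²(ℝ²) and for j = 1, 2 write ∂_{x_j}ψ = |∂_{x_j}ψ| φ_j with φ_j a polar factor of ∂_{x_j}ψ. Then almost everywhere |∂²_{x_j}ψ|² = (∂_{x_j}|∂_{x_j}ψ|)² + (Im(∂_{x_j}ψ̄ · ∂²_{x_j}ψ) / |∂_{x_j}ψ|)², where the second term is interpreted as 0 where ∂_{x_j}ψ = 0. -/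
open MeasureTheory Complex

noncomputable section

/-!
Where `g := ∂_{x_j}ψ` does not vanish, `|g|` is differentiable with
`∂_{x_j}|g| = Re(ḡ ∂_{x_j}g) / |g|`, and the identity is
`|g|² |∂_{x_j}g|² = |ḡ ∂_{x_j}g|² = Re(ḡ ∂_{x_j}g)² + Im(ḡ ∂_{x_j}g)²`.
On the zero set of `g` both `∂_{x_j}g` and `∂_{x_j}|g|` vanish almost everywhere: at a Lebesgue
density point `x` of a level set, every small ball `B(x + r v, ε r)` meets the level set, so the
tangent cone of the level set at `x` is the whole space and any derivative at `x` of a function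
constant on it is zero.
-/

open Filter Topology Set Metric ComplexConjugate

theorem HasFDerivAt.norm_of_ne_zero {G F : Type*} [NormedAddCommGroup G] [NormedSpace ℝ G]
    [NormedAddCommGroup F] [InnerProductSpace ℝ F] {f : G → F} {f' : G →L[ℝ] F} {x : G}
    (hf : HasFDerivAt f f' x) (h0 : f x ≠ 0) :
    HasFDerivAt (‖f ·‖) (‖f x‖⁻¹ • (innerSL ℝ (f x)).comp f') x := by
  have hsqrt := hf.norm_sq.sqrt (by positivity)
  simp only [Real.sqrt_sq (norm_nonneg _)] at hsqrt
  convert hsqrt using 1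
  ext v
  simp only [smul_apply, ContinuousLinearMap.comp_apply, coe_innerSL_apply,
    smul_eq_mul, one_div, mul_inv_rev, nsmul_eq_mul, Nat.cast_ofNat]
  field_simp

theorem fderiv_norm_apply_of_ne_zero {E : Type*} [NormedAddCommGroup E] [NormedSpace ℝ E]
    {g : E → ℂ} {x : E} (hg : DifferentiableAt ℝ g x) (h0 : g x ≠ 0) (v : E) :
    fderiv ℝ (‖g ·‖) x v = (conj (g x) * fderiv ℝ g x v).re / ‖g x‖ := by
  rw [(hg.hasFDerivAt.norm_of_ne_zero h0).fderiv]
  simp [Complex.inner, mul_comm, div_eq_inv_mul]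

theorem Complex.sq_norm_eq_conj_mul_re_div_sq_add_im_div_sq {z : ℂ} (hz : z ≠ 0) (w : ℂ) :
    ‖w‖ ^ 2 = ((conj z * w).re / ‖z‖) ^ 2 + ((conj z * w).im / ‖z‖) ^ 2 := by
  have hsq : ‖conj z * w‖ ^ 2 = (conj z * w).re ^ 2 + (conj z * w).im ^ 2 := by
    rw [Complex.sq_norm, normSq_apply]; ring
  rw [div_pow, div_pow, ← add_div, ← hsq, norm_mul, norm_conj]
  field_simp

section TangentCone

variable {E : Type*} [NormedAddCommGroup E] [NormedSpace ℝ E]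

theorem mem_tangentConeAt_of_frequently_near {s : Set E} {x v : E}
    (h : ∀ ε > 0, ∃ᶠ r in 𝓝[>] (0 : ℝ), ∃ y ∈ s, ‖y - (x + r • v)‖ ≤ ε * r) :
    v ∈ tangentConeAt ℝ s x := by
  have hseq (n : ℕ) : ∃ r ∈ Ioo (0 : ℝ) (n + 1 : ℝ)⁻¹, ∃ y ∈ s,
      ‖y - (x + r • v)‖ ≤ (n + 1 : ℝ)⁻¹ * r :=
    ((h _ (by positivity)).and_eventually (Ioo_mem_nhdsGT (by positivity))).exists.imp
      fun _ hr ↦ ⟨hr.2, hr.1⟩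
  choose r hr y hys hy using hseq
  rw [mem_tangentConeAt_iff_exists_seq_norm_tendsto_atTop]
  refine ⟨fun n ↦ (r n)⁻¹, fun n ↦ y n - x, ?_, .of_forall fun n ↦ by simpa using hys n, ?_⟩
  · refine tendsto_atTop_mono (fun n ↦ ?_) tendsto_natCast_atTop_atTop
    have : (n + 1 : ℝ) < (r n)⁻¹ := by rw [lt_inv_comm₀ (by positivity) (hr n).1]; exact (hr n).2
    rw [norm_inv, Real.norm_of_nonneg (hr n).1.le]
    linarith
  · rw [tendsto_iff_norm_sub_tendsto_zero]
    refine squeeze_zero (fun n ↦ norm_nonneg _) (fun n ↦ ?_) tendsto_one_div_add_atTop_nhds_zero_nat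
    have hrn := (hr n).1
    calc ‖(r n)⁻¹ • (y n - x) - v‖ = ‖(r n)⁻¹ • (y n - (x + r n • v))‖ := by
          rw [← sub_sub, smul_sub _ (y n - x), smul_smul, inv_mul_cancel₀ hrn.ne', one_smul]
      _ ≤ 1 / (n + 1) := by
          rw [norm_smul, norm_inv, Real.norm_of_nonneg hrn.le, inv_mul_le_iff₀ hrn, one_div]
          linarith [hy n]

variable [FiniteDimensional ℝ E] [MeasurableSpace E] [BorelSpace E]
  (μ : Measure E) [μ.IsAddHaarMeasure]

theorem ae_tangentConeAt_eq_univ (s : Set E) :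
    ∀ᵐ x ∂μ.restrict s, tangentConeAt ℝ s x = univ := by
  -- `x ∈ closedBall (x + r • v) (n * (ε * r))` once `‖v‖ ≤ n * ε`: one null set per `n : ℕ`.
  filter_upwards [ae_all_iff.2 fun n : ℕ ↦
    IsUnifLocDoublingMeasure.ae_tendsto_measure_inter_div μ s n] with x hx
  refine eq_univ_of_forall fun v ↦ mem_tangentConeAt_of_frequently_near fun ε hε ↦ ?_
  obtain ⟨n, hn⟩ := exists_nat_ge (‖v‖ / ε)
  have hδ : Tendsto (fun r : ℝ ↦ ε * r) (𝓝[>] 0) (𝓝[>] 0) :=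
    tendsto_nhdsWithin_iff.2
      ⟨((continuous_const_mul ε).tendsto' 0 0 (mul_zero ε)).mono_left nhdsWithin_le_nhds,
        eventually_nhdsWithin_of_forall fun r hr ↦ mul_pos hε hr⟩
  have hxmem : ∀ᶠ r in 𝓝[>] (0 : ℝ), x ∈ closedBall (x + r • v) (n * (ε * r)) := by
    refine eventually_nhdsWithin_of_forall fun r (hr : 0 < r) ↦ ?_
    rw [mem_closedBall, dist_comm, dist_self_add_left, norm_smul, Real.norm_of_nonneg hr.le]
    rw [div_le_iff₀ hε] at hn
    nlinarith
  refine ((hx n _ _ hδ hxmem).eventually (lt_mem_nhds zero_lt_one)).frequently.mono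
    fun r hr ↦ ?_
  obtain ⟨y, hys, hyB⟩ := nonempty_of_measure_ne_zero (ENNReal.div_pos_iff.1 hr).1
  exact ⟨y, hys, by rwa [mem_closedBall, dist_eq_norm] at hyB⟩

theorem ae_fderiv_eq_zero_of_apply_eq {F : Type*} [NormedAddCommGroup F] [NormedSpace ℝ F]
    (f : E → F) (c : F) : ∀ᵐ x ∂μ, f x = c → fderiv ℝ f x = 0 := by
  filter_upwards [ae_imp_of_ae_restrict (ae_tangentConeAt_eq_univ μ (f ⁻¹' {c}))]
    with x hcone hx
  by_cases hd : DifferentiableAt ℝ f x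
  · have hconst : HasFDerivWithinAt f (0 : E →L[ℝ] F) (f ⁻¹' {c}) x :=
      (hasFDerivWithinAt_const c x _).congr (fun y hy ↦ hy) hx
    ext1 v
    exact hd.hasFDerivAt.hasFDerivWithinAt.unique_on hconst (hcone hx ▸ mem_univ v)
  · exact fderiv_zero_of_not_differentiableAt hd

end TangentCone

theorem second_derivative_polar_decomposition_general
    (ψ : EuclideanSpace ℝ (Fin 2) → ℂ)
    (hψ2diff : ∀ i : Fin 2, Differentiable ℝ (fun x => pdc i ψ x))
    (j : Fin 2) :
    ∀ᵐ x ∂volume,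
      ‖pdc j (fun y => pdc j ψ y) x‖ ^ 2
        = (pd j (fun y => ‖pdc j ψ y‖) x) ^ 2
          + (if pdc j ψ x = 0 then 0
             else (((starRingEnd ℂ) (pdc j ψ x) * pdc j (fun y => pdc j ψ y) x).im
               / ‖pdc j ψ x‖) ^ 2) := by
  filter_upwards [ae_fderiv_eq_zero_of_apply_eq volume (pdc j ψ) 0,
    ae_fderiv_eq_zero_of_apply_eq volume (‖pdc j ψ ·‖) 0] with x hderiv hnorm
  by_cases h0 : pdc j ψ x = 0
  · have hd : pdc j (pdc j ψ) x = 0 := by rw [pdc, hderiv h0]; rfl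
    have hn : pd j (‖pdc j ψ ·‖) x = 0 := by rw [pd, hnorm (by simp [h0])]; rfl
    simp [h0, hd, hn]
  · rw [if_neg h0, pd, fderiv_norm_apply_of_ne_zero (hψ2diff j x) h0]
    exact Complex.sq_norm_eq_conj_mul_re_div_sq_add_im_div_sq h0 _

/-- For `ψ ∈ H²(ℝ²)` with `∂_{x_j}ψ = |∂_{x_j}ψ| φ_j`, `φ_j` a polar factor of
`∂_{x_j}ψ`, the identity
`|∂²_{x_j}ψ|² = (∂_{x_j}|∂_{x_j}ψ|)² + (Im(∂_{x_j}ψ̄ ∂²_{x_j}ψ)/|∂_{x_j}ψ|)²`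
holds almost everywhere, the last term interpreted as `0` where `∂_{x_j}ψ = 0`. -/
theorem second_derivative_polar_decomposition
    (ψ : EuclideanSpace ℝ (Fin 2) → ℂ)
    (hψdiff : Differentiable ℝ ψ)
    (hψ2diff : ∀ i : Fin 2, Differentiable ℝ (fun x => pdc i ψ x))
    (hψL2 : MemLp ψ 2 volume)
    (hgradL2 : MemLp (fun x => fderiv ℝ ψ x) 2 volume)
    (hhessL2 : ∀ i : Fin 2, MemLp (fun x => fderiv ℝ (fun y => pdc i ψ y) x) 2 volume)
    (j : Fin 2) (φj : EuclideanSpace ℝ (Fin 2) → ℂ)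
    (hφj : ∀ᵐ x ∂volume, ‖φj x‖ ≤ 1)
    (hpolarj : ∀ᵐ x ∂volume, (‖pdc j ψ x‖ : ℂ) * φj x = pdc j ψ x) :
    ∀ᵐ x ∂volume,
      ‖pdc j (fun y => pdc j ψ y) x‖ ^ 2
        = (pd j (fun y => ‖pdc j ψ y‖) x) ^ 2
          + (if pdc j ψ x = 0 then 0
             else (((starRingEnd ℂ) (pdc j ψ x) * pdc j (fun y => pdc j ψ y) x).im
               / ‖pdc j ψ x‖) ^ 2) :=
  second_derivative_polar_decomposition_general ψ hψ2diff j

end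
end

section
/- Let (ρ, J) be a finite energy weak solution of the QHD system with ∫|x|²ρ₀ dx < ∞ and p(ρ) = ((γ−1)/γ)ρ^γ, 1 < γ ≤ 1 + 2/d. Then ∫ ρ^γ(t,x) dx ≲ t^{d(1−γ)} and V(t) ≲ t^{2(1−σ)} + ∫(|x|²/2)ρ₀ dx with σ = d(γ−1)/2; consequently ‖∇√ρ(t)‖_{L²} ≲ t^{−σ}, ‖Λ(t) − (x/t)√ρ(t)‖_{L²} ≲ t^{−σ}, and ‖ρ^{γ/2}(t)‖_{L²} ≲ t^{−σ}. -/
/-!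
The representation of `V` bounds each of `t²/γ ∫ρ^γ`, `t²/2 ‖∇√ρ‖²` and `t²/2 ‖Λ - (x/t)√ρ‖²`
by `V(t)`. Writing `R(t) = ∫ρ^γ` and `c = 2(1 - σ)`, which is `≥ 0` exactly because
`γ ≤ 1 + 2/d`, the pseudo-conformal identity reads `γV(t) = γV(1) + c ∫₁ᵗ s R(s) ds`, while
`t² R(t) ≤ γV(t)`. This is a Gronwall inequality for `s ↦ s R(s)` with kernel `c/s`, whence
`V(t) ≤ V(1) t^c`; dividing by `t²` gives the `t^(-2σ)` decay of the three terms.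
-/

open MeasureTheory intervalIntegral Set

theorem antitoneOn_mul_rpow_neg_of_mul_deriv_le {Q Q' : ℝ → ℝ} {a b c : ℝ} (ha : 0 < a)
    (hQ : ContinuousOn Q (Icc a b)) (hQ' : ∀ u ∈ Ioo a b, HasDerivAt Q (Q' u) u)
    (hle : ∀ u ∈ Ioo a b, u * Q' u ≤ c * Q u) :
    AntitoneOn (fun u => Q u * u ^ (-c)) (Icc a b) := by
  have hpos : ∀ u ∈ Icc a b, 0 < u := fun u hu => ha.trans_le hu.1
  refine antitoneOn_of_hasDerivWithinAt_nonpos (convex_Icc a b)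
    (f' := fun u => Q' u * u ^ (-c) + Q u * (-c * u ^ (-c - 1)))
    (hQ.mul (continuousOn_id.rpow_const fun u hu => Or.inl (hpos u hu).ne'))
    (fun u hu => ?_) (fun u hu => ?_) <;> rw [interior_Icc] at hu
  · exact ((hQ' u hu).mul (Real.hasDerivAt_rpow_const
      (Or.inl (hpos u (Ioo_subset_Icc_self hu)).ne'))).hasDerivWithinAt
  · have hu0 := hpos u (Ioo_subset_Icc_self hu)
    have hu_rpow : 0 ≤ u ^ (-c) / u := by positivity
    rw [Real.rpow_sub_one hu0.ne']
    calc Q' u * u ^ (-c) + Q u * (-c * (u ^ (-c) / u))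
        = u ^ (-c) / u * (u * Q' u - c * Q u) := by field_simp; ring
      _ ≤ 0 := mul_nonpos_of_nonneg_of_nonpos hu_rpow (by linarith [hle u hu])

/-- Gronwall's inequality for the kernel `c / s`, whose extremal solution is `a s^c`. -/
theorem add_mul_integral_le_mul_rpow {f : ℝ → ℝ} {a c t : ℝ} (hc : 0 ≤ c) (ht : 1 ≤ t)
    (hf : IntervalIntegrable f volume 1 t)
    (h : ∀ s ∈ Icc 1 t, s * f s ≤ a + c * ∫ r in 1..s, f r) :
    a + c * ∫ s in 1..t, f s ≤ a * t ^ c := by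
  set P : ℝ → ℝ := fun u => a + c * ∫ r in 1..u, f r
  -- `P` is only continuous; its majorant `Q` is differentiable, with `u Q' ≤ c Q`.
  set Q : ℝ → ℝ := fun u => a + c * ∫ s in 1..u, P s / s with hQ_def
  have hpos : ∀ s ∈ Icc 1 t, 0 < s := fun s hs => one_pos.trans_le hs.1
  have hP : ContinuousOn P (Icc 1 t) := by
    have := continuousOn_primitive_interval' hf left_mem_uIcc
    rw [uIcc_of_le ht] at this
    exact continuousOn_const.add (continuousOn_const.mul this)
  have hPs : ContinuousOn (fun s => P s / s) (Icc 1 t) :=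
    hP.div continuousOn_id fun s hs => (hpos s hs).ne'
  have hPs_int : ∀ u ∈ Icc 1 t, IntervalIntegrable (fun s => P s / s) volume 1 u :=
    fun u hu => (hPs.mono (Icc_subset_Icc_right hu.2)).intervalIntegrable_of_Icc hu.1
  have hPQ : ∀ u ∈ Icc 1 t, P u ≤ Q u := by
    intro u hu
    refine (add_le_add_iff_left a).2 (mul_le_mul_of_nonneg_left ?_ hc)
    refine integral_mono_on hu.1 (hf.mono_set ?_) (hPs_int u hu) fun s hs => ?_
    · rw [uIcc_of_le hu.1, uIcc_of_le ht]
      exact Icc_subset_Icc_right hu.2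
    · rw [le_div_iff₀ (hpos s ⟨hs.1, hs.2.trans hu.2⟩), mul_comm]
      exact h s ⟨hs.1, hs.2.trans hu.2⟩
  have hQ : ContinuousOn Q (Icc 1 t) := by
    have := continuousOn_primitive_interval' (hPs_int t ⟨ht, le_rfl⟩) left_mem_uIcc
    rw [uIcc_of_le ht] at this
    exact continuousOn_const.add (continuousOn_const.mul this)
  have hQ' : ∀ u ∈ Ioo 1 t, HasDerivAt Q (c * (P u / u)) u := fun u hu =>
    ((integral_hasDerivAt_right (hPs_int u (Ioo_subset_Icc_self hu))
      ((hPs.mono Ioo_subset_Icc_self).stronglyMeasurableAtFilter isOpen_Ioo u hu)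
      (hPs.continuousAt (Icc_mem_nhds hu.1 hu.2))).const_mul c).const_add a
  have hQ'_le : ∀ u ∈ Ioo 1 t, u * (c * (P u / u)) ≤ c * Q u := by
    intro u hu
    have hu0 := (hpos u (Ioo_subset_Icc_self hu)).ne'
    rw [show u * (c * (P u / u)) = c * P u by field_simp]
    exact mul_le_mul_of_nonneg_left (hPQ u (Ioo_subset_Icc_self hu)) hc
  have hQt : Q t * t ^ (-c) ≤ a := by
    simpa [hQ_def] using antitoneOn_mul_rpow_neg_of_mul_deriv_le one_pos hQ hQ' hQ'_le
      ⟨le_rfl, ht⟩ ⟨ht, le_rfl⟩ ht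
  have htc : 0 < t ^ c := Real.rpow_pos_of_pos (one_pos.trans_le ht) c
  calc P t ≤ Q t := hPQ t ⟨ht, le_rfl⟩
    _ = Q t * t ^ (-c) * t ^ c := by
        rw [mul_assoc, Real.rpow_neg (one_pos.trans_le ht).le, inv_mul_cancel₀ htc.ne', mul_one]
    _ ≤ a * t ^ c := mul_le_mul_of_nonneg_right hQt htc.le

theorem le_mul_rpow_of_eq_add_integral {R V : ℝ → ℝ} {A b γ t : ℝ} (hb : 0 ≤ b) (hγ : 0 < γ)
    (hR : ∀ s, 0 ≤ R s) (hRV : ∀ s > 0, s ^ 2 / γ * R s ≤ V s)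
    (hV : ∀ s > 0, V s = A + b * ∫ r in 0..s, r * R r) (ht : 1 ≤ t) :
    V t ≤ V 1 * t ^ (b * γ) := by
  have hG1 : 0 ≤ ∫ r in 0..1, r * R r :=
    integral_nonneg zero_le_one fun r hr => mul_nonneg hr.1 (hR r)
  have hV1 : 0 ≤ V 1 := (mul_nonneg (by positivity) (hR 1)).trans (hRV 1 one_pos)
  have htc : 1 ≤ t ^ (b * γ) := Real.one_le_rpow ht (by positivity)
  by_cases hI : IntervalIntegrable (fun r => r * R r) volume 0 t
  · have hIsub : ∀ s ∈ Icc 0 t, IntervalIntegrable (fun r => r * R r) volume 0 s :=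
      fun s hs => hI.mono_set <| by
        rw [uIcc_of_le hs.1, uIcc_of_le (hs.1.trans hs.2)]
        exact Icc_subset_Icc_right hs.2
    have hγV : ∀ s ∈ Icc 1 t, γ * V s = γ * V 1 + b * γ * ∫ r in 1..s, r * R r := by
      intro s hs
      have hI1 := hIsub 1 ⟨zero_le_one, ht⟩
      have hadd := integral_add_adjacent_intervals hI1
        ((hIsub s ⟨zero_le_one.trans hs.1, hs.2⟩).symm.trans hI1).symm
      rw [hV s (one_pos.trans_le hs.1), hV 1 one_pos, ← hadd]
      ring
    have hgronwall := add_mul_integral_le_mul_rpow (a := γ * V 1) (c := b * γ) (by positivity)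
      ht ((hIsub 1 ⟨zero_le_one, ht⟩).symm.trans hI) fun s hs => ?_
    · rw [← hγV t ⟨ht, le_rfl⟩, mul_assoc] at hgronwall
      exact le_of_mul_le_mul_left hgronwall hγ
    · calc s * (s * R s) = γ * (s ^ 2 / γ * R s) := by field_simp
        _ ≤ γ * V s := mul_le_mul_of_nonneg_left (hRV s (one_pos.trans_le hs.1)) hγ.le
        _ = _ := hγV s hs
  · -- the integral takes the junk value `0`, so `V t = A`
    have hVt : V t = A := by
      rw [hV t (one_pos.trans_le ht), integral_undef hI, mul_zero, add_zero]
    have hAV1 : A ≤ V 1 := by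
      rw [hV 1 one_pos]
      nlinarith
    nlinarith

section IntegralOfSum

variable {α : Type*} [MeasurableSpace α] {μ : Measure α}

theorem mul_integral_le_integral {f g : α → ℝ} {k : ℝ} (hk : 0 ≤ k) (hf : ∀ x, 0 ≤ f x)
    (hg : Integrable g μ) (hfg : ∀ x, k * f x ≤ g x) :
    k * ∫ x, f x ∂μ ≤ ∫ x, g x ∂μ := by
  rw [← MeasureTheory.integral_const_mul]
  exact integral_mono_of_nonneg (ae_of_all _ fun x => mul_nonneg hk (hf x)) hg (ae_of_all _ hfg)

theorem mul_integral_le_integral_add_add {f g h : α → ℝ} {k l m : ℝ}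
    (hk : 0 ≤ k) (hl : 0 ≤ l) (hm : 0 ≤ m)
    (hf : ∀ x, 0 ≤ f x) (hg : ∀ x, 0 ≤ g x) (hh : ∀ x, 0 ≤ h x)
    (hint : Integrable (fun x => k * f x + l * g x + m * h x) μ) :
    k * ∫ x, f x ∂μ ≤ ∫ x, k * f x + l * g x + m * h x ∂μ
      ∧ l * ∫ x, g x ∂μ ≤ ∫ x, k * f x + l * g x + m * h x ∂μ
      ∧ m * ∫ x, h x ∂μ ≤ ∫ x, k * f x + l * g x + m * h x ∂μ := by
  have hkf := fun x => mul_nonneg hk (hf x)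
  have hlg := fun x => mul_nonneg hl (hg x)
  have hmh := fun x => mul_nonneg hm (hh x)
  refine ⟨mul_integral_le_integral hk hf hint fun x => ?_,
    mul_integral_le_integral hl hg hint fun x => ?_,
    mul_integral_le_integral hm hh hint fun x => ?_⟩ <;> linarith [hkf x, hlg x, hmh x]

end IntegralOfSum

theorem le_mul_rpow_sub_two {Q W k c t : ℝ} (hk : 0 < k) (ht : 0 < t)
    (h : t ^ 2 / k * Q ≤ W * t ^ c) : Q ≤ k * W * t ^ (c - 2) := by
  rw [Real.rpow_sub ht, Real.rpow_two, ← mul_div_assoc, le_div_iff₀ (by positivity)]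
  rw [div_mul_eq_mul_div, div_le_iff₀ hk] at h
  linarith

theorem pseudoConformal_coeff_nonneg_and_mul_eq {d : ℕ} {γ : ℝ} (hγ : 1 < γ)
    (hγ' : γ ≤ 1 + 2 / (d : ℝ)) :
    0 ≤ -((d : ℝ) * (1 - (1 + 2 / (d : ℝ)) / γ))
      ∧ -((d : ℝ) * (1 - (1 + 2 / (d : ℝ)) / γ)) * γ = 2 * (1 - d * (γ - 1) / 2) := by
  have hd : (d : ℝ) ≠ 0 := fun h => by rw [h, div_zero] at hγ'; linarith
  refine ⟨neg_nonneg.2 (mul_nonpos_of_nonneg_of_nonpos d.cast_nonneg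
    (sub_nonpos.2 ((one_le_div (by linarith)).2 hγ'))), ?_⟩
  field_simp
  ring

theorem dispersive_estimates_QHD_general {d : ℕ}
    (γ : ℝ) (hγ : 1 < γ) (hγ' : γ ≤ 1 + 2 / (d : ℝ))
    (σ : ℝ) (hσ : σ = (d : ℝ) * (γ - 1) / 2)
    (sr : ℝ → EuclideanSpace ℝ (Fin d) → ℝ)
    (Λ : ℝ → EuclideanSpace ℝ (Fin d) → EuclideanSpace ℝ (Fin d))
    (hint : ∀ t > (0:ℝ), Integrable (fun x =>
      (t ^ 2 / 2 * ‖gradient (sr t) x‖ ^ 2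
        + t ^ 2 / 2 * ‖Λ t x - (t⁻¹ * sr t x) • x‖ ^ 2
        + t ^ 2 / γ * ((sr t x) ^ 2) ^ γ)))
    (V : ℝ → ℝ)
    -- representation of the pseudo-conformal energy
    (hVrep : ∀ t > (0:ℝ), V t = ∫ x,
      (t ^ 2 / 2 * ‖gradient (sr t) x‖ ^ 2
        + t ^ 2 / 2 * ‖Λ t x - (t⁻¹ * sr t x) • x‖ ^ 2
        + t ^ 2 / γ * ((sr t x) ^ 2) ^ γ))
    -- pseudo-conformal identity
    (hVid : ∀ t > (0:ℝ), V t + (d : ℝ) * (1 - (1 + 2 / (d : ℝ)) / γ)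
        * ∫ s in (0:ℝ)..t, s * ∫ x, ((sr s x) ^ 2) ^ γ
      = ∫ x, ‖x‖ ^ 2 / 2 * (sr 0 x) ^ 2) :
    ∃ C > 0, ∀ t ≥ (1:ℝ),
      (∫ x, ((sr t x) ^ 2) ^ γ) ≤ C * t ^ ((d : ℝ) * (1 - γ))
      ∧ V t ≤ C * (t ^ (2 * (1 - σ)) + ∫ x, ‖x‖ ^ 2 / 2 * (sr 0 x) ^ 2)
      ∧ (∫ x, ‖gradient (sr t) x‖ ^ 2) ≤ C * t ^ (-2 * σ)
      ∧ (∫ x, ‖Λ t x - (t⁻¹ * sr t x) • x‖ ^ 2) ≤ C * t ^ (-2 * σ)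
      ∧ (∫ x, ((sr t x) ^ 2) ^ γ) ≤ C * t ^ (-2 * σ) := by
  obtain ⟨hb, hc⟩ := pseudoConformal_coeff_nonneg_and_mul_eq hγ hγ'
  rw [← hσ] at hc
  have hterms : ∀ t > (0:ℝ), t ^ 2 / 2 * ∫ x, ‖gradient (sr t) x‖ ^ 2 ≤ V t
      ∧ t ^ 2 / 2 * ∫ x, ‖Λ t x - (t⁻¹ * sr t x) • x‖ ^ 2 ≤ V t
      ∧ t ^ 2 / γ * ∫ x, ((sr t x) ^ 2) ^ γ ≤ V t := fun t ht =>
    hVrep t ht ▸ mul_integral_le_integral_add_add (by positivity) (by positivity)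
      (by positivity) (fun x => by positivity) (fun x => by positivity)
      (fun x => by positivity) (hint t ht)
  have hV1 : 0 ≤ V 1 := (by positivity : (0:ℝ) ≤ 1 ^ 2 / γ * _).trans (hterms 1 one_pos).2.2
  refine ⟨(γ + 2) * V 1 + 1, by positivity, fun t ht => ?_⟩
  have ht0 : 0 < t := one_pos.trans_le ht
  have hVt : V t ≤ V 1 * t ^ (2 * (1 - σ)) := hc ▸ le_mul_rpow_of_eq_add_integral
    (R := fun s => ∫ x, ((sr s x) ^ 2) ^ γ) (A := ∫ x, ‖x‖ ^ 2 / 2 * (sr 0 x) ^ 2) hb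
    (by linarith) (fun s => integral_nonneg fun x => by positivity)
    (fun s hs => (hterms s hs).2.2) (fun s hs => by linarith [hVid s hs]) ht
  have hdecay : ∀ k Q : ℝ, 0 < k → k ≤ γ + 2 → t ^ 2 / k * Q ≤ V t →
      Q ≤ ((γ + 2) * V 1 + 1) * t ^ (-2 * σ) := fun k Q hk hkγ hQ => by
    refine (le_mul_rpow_sub_two hk ht0 (hQ.trans hVt)).trans ?_
    rw [show 2 * (1 - σ) - 2 = -2 * σ by ring]
    exact mul_le_mul_of_nonneg_right (by nlinarith) (by positivity)
  obtain ⟨hgrad, hvel, hpot⟩ := hterms t ht0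
  have hpot_decay := hdecay γ _ (by linarith) (by linarith) hpot
  refine ⟨by rwa [show (d : ℝ) * (1 - γ) = -2 * σ by rw [hσ]; ring], ?_,
    hdecay 2 _ two_pos (by linarith) hgrad, hdecay 2 _ two_pos (by linarith) hvel, hpot_decay⟩
  have hA : 0 ≤ ∫ x, ‖x‖ ^ 2 / 2 * (sr 0 x) ^ 2 := integral_nonneg fun x => by positivity
  calc V t ≤ V 1 * t ^ (2 * (1 - σ)) := hVt
    _ ≤ ((γ + 2) * V 1 + 1) * t ^ (2 * (1 - σ)) :=
        mul_le_mul_of_nonneg_right (by nlinarith) (by positivity)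
    _ ≤ _ := mul_le_mul_of_nonneg_left (le_add_of_nonneg_right hA) (by positivity)

/-- Dispersive estimates for finite energy weak solutions of the QHD system
with `p(ρ) = ((γ−1)/γ)ρ^γ`, `1 < γ ≤ 1 + 2/d` and finite initial variance.
The pseudo-conformal energy `V(t)` (given by its representation) satisfies the
pseudo-conformal identity; then, with `σ = d(γ−1)/2`,
`∫ρ^γ(t) ≲ t^{d(1−γ)}`, `V(t) ≲ t^{2(1−σ)} + ∫(|x|²/2)ρ₀`, and
`‖∇√ρ(t)‖_{L²} ≲ t^{−σ}`, `‖Λ(t) − (x/t)√ρ(t)‖_{L²} ≲ t^{−σ}`,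
`‖ρ^{γ/2}(t)‖_{L²} ≲ t^{−σ}`. -/
theorem dispersive_estimates_QHD {d : ℕ} (hd : 0 < d)
    (γ : ℝ) (hγ : 1 < γ) (hγ' : γ ≤ 1 + 2 / (d : ℝ))
    (σ : ℝ) (hσ : σ = (d : ℝ) * (γ - 1) / 2)
    (sr : ℝ → EuclideanSpace ℝ (Fin d) → ℝ)
    (Λ : ℝ → EuclideanSpace ℝ (Fin d) → EuclideanSpace ℝ (Fin d))
    (hsr : ∀ t x, 0 ≤ sr t x)
    (hsrdiff : ∀ t, Differentiable ℝ (sr t))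
    (hvar0 : Integrable (fun x => ‖x‖ ^ 2 * (sr 0 x) ^ 2))
    (hint : ∀ t > (0:ℝ), Integrable (fun x =>
      (t ^ 2 / 2 * ‖gradient (sr t) x‖ ^ 2
        + t ^ 2 / 2 * ‖Λ t x - (t⁻¹ * sr t x) • x‖ ^ 2
        + t ^ 2 / γ * ((sr t x) ^ 2) ^ γ)))
    (hρint : ∀ t > (0:ℝ), Integrable (fun x => ((sr t x) ^ 2) ^ γ))
    (V : ℝ → ℝ)
    -- representation of the pseudo-conformal energy
    (hVrep : ∀ t > (0:ℝ), V t = ∫ x,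
      (t ^ 2 / 2 * ‖gradient (sr t) x‖ ^ 2
        + t ^ 2 / 2 * ‖Λ t x - (t⁻¹ * sr t x) • x‖ ^ 2
        + t ^ 2 / γ * ((sr t x) ^ 2) ^ γ))
    -- pseudo-conformal identity
    (hVid : ∀ t > (0:ℝ), V t + (d : ℝ) * (1 - (1 + 2 / (d : ℝ)) / γ)
        * ∫ s in (0:ℝ)..t, s * ∫ x, ((sr s x) ^ 2) ^ γ
      = ∫ x, ‖x‖ ^ 2 / 2 * (sr 0 x) ^ 2) :
    ∃ C > 0, ∀ t ≥ (1:ℝ),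
      (∫ x, ((sr t x) ^ 2) ^ γ) ≤ C * t ^ ((d : ℝ) * (1 - γ))
      ∧ V t ≤ C * (t ^ (2 * (1 - σ)) + ∫ x, ‖x‖ ^ 2 / 2 * (sr 0 x) ^ 2)
      ∧ (∫ x, ‖gradient (sr t) x‖ ^ 2) ≤ C * t ^ (-2 * σ)
      ∧ (∫ x, ‖Λ t x - (t⁻¹ * sr t x) • x‖ ^ 2) ≤ C * t ^ (-2 * σ)
      ∧ (∫ x, ((sr t x) ^ 2) ^ γ) ≤ C * t ^ (-2 * σ) :=
  dispersive_estimates_QHD_general γ hγ hγ' σ hσ sr Λ hint V hVrep hVid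
end

section
/- Let ψ = √ρ e^{iS} be an H² solution of the nonlinear Schrödinger equation i∂_tψ = −(1/2)Δψ + f'(|ψ|²)ψ, with polar factor φ ∈ P(ψ), and define λ := −Im(φ̄ ∂_tψ). Then √ρ λ = −Im(ψ̄∂_tψ) = −(1/4)Δρ + e + p(ρ) almost everywhere, where e = (1/2)|∇√ρ|² + (1/2)|Λ|² + f(ρ), Λ = Im(φ̄∇ψ), ρ = |ψ|², and p(ρ) = ρf'(ρ) − f(ρ). -/
open MeasureTheory Complex

noncomputable section

open Filter Set Topology in
private lemma countable_bad' (u : ℝ → ℂ) (hu : Differentiable ℝ u) :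
    Set.Countable {x | u x = 0 ∧ deriv u x ≠ 0} := by
  set S := {x | u x = 0 ∧ deriv u x ≠ 0} with hS
  have key : ∀ x ∈ S, 𝓝[≠] x ⊓ 𝓟 {y | u y = 0} = ⊥ := by
    intro x hx
    by_contra h
    haveI : (𝓝[≠] x ⊓ 𝓟 {y | u y = 0}).NeBot := ⟨h⟩
    have T1 : Tendsto (slope u x) (𝓝[≠] x ⊓ 𝓟 {y | u y = 0}) (𝓝 (deriv u x)) :=
      (hasDerivAt_iff_tendsto_slope.mp (hu x).hasDerivAt).mono_left inf_le_left
    have T2 : Tendsto (slope u x) (𝓝[≠] x ⊓ 𝓟 {y | u y = 0}) (𝓝 0) := by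
      apply tendsto_const_nhds.congr'
      filter_upwards [mem_inf_of_right (mem_principal_self _)] with y hy
      simp [slope, hy, hx.1]
    exact hx.2 (tendsto_nhds_unique T1 T2)
  have hdisc : DiscreteTopology S := by
    rw [discreteTopology_subtype_iff]
    intro x hx
    refine le_bot_iff.mp ?_
    calc 𝓝[≠] x ⊓ 𝓟 S ≤ 𝓝[≠] x ⊓ 𝓟 {y | u y = 0} := by
          gcongr
          exact fun y hy => hy.1
      _ = ⊥ := key x hx
  have : Countable S := TopologicalSpace.separableSpace_iff_countable.mp inferInstance
  exact Set.countable_coe_iff.mp this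

open Filter Set Topology in
private lemma ae_pdc_zero' {d : ℕ} (ψ : EuclideanSpace ℝ (Fin d) → ℂ)
    (hψ : Differentiable ℝ ψ) (i : Fin d) :
    ∀ᵐ x ∂(volume : Measure (EuclideanSpace ℝ (Fin d))),
      ψ x = 0 → fderiv ℝ ψ x (EuclideanSpace.single i 1) = 0 := by
  set v : EuclideanSpace ℝ (Fin d) := EuclideanSpace.single i 1 with hv
  set s : Set (EuclideanSpace ℝ (Fin d)) := {x | ψ x = 0 → fderiv ℝ ψ x v = 0} with hs
  have hmeas : MeasurableSet s := by
    have m1 : MeasurableSet (ψ ⁻¹' {0}) :=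
      hψ.continuous.measurable (measurableSet_singleton 0)
    have m2 : Measurable fun x => fderiv ℝ ψ x v :=
      measurable_fderiv_apply_const ℝ (f := ψ) v
    have : s = (ψ ⁻¹' {0})ᶜ ∪ ((fun x => fderiv ℝ ψ x v) ⁻¹' {0}) := by
      ext x; simp [hs, imp_iff_not_or]
    rw [this]
    exact m1.compl.union (m2 (measurableSet_singleton 0))
  have main : ∀ y, ∀ᵐ t : ℝ ∂volume, y + (LinearMap.toSpanSingleton ℝ _ v) t ∈ s := by
    intro y
    set u : ℝ → ℂ := fun t => ψ (y + t • v) with hu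
    have hud : ∀ t : ℝ, HasDerivAt u (fderiv ℝ ψ (y + t • v) v) t := by
      intro t
      have hg : HasDerivAt (fun t : ℝ => y + t • v) v t := by
        simpa using ((hasDerivAt_id t).smul_const v).const_add y
      exact ((hψ (y + t • v)).hasFDerivAt).comp_hasDerivAt t hg
    have hsub : {t : ℝ | ¬ (y + (LinearMap.toSpanSingleton ℝ _ v) t ∈ s)}
        ⊆ {t | u t = 0 ∧ deriv u t ≠ 0} := by
      intro t ht
      rw [Set.mem_setOf_eq] at ht
      simp only [hs, LinearMap.toSpanSingleton_apply, Set.mem_setOf_eq,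
        Classical.not_imp] at ht
      refine ⟨ht.1, ?_⟩
      rw [(hud t).deriv]
      exact ht.2
    have hcnt : Set.Countable {t | u t = 0 ∧ deriv u t ≠ 0} :=
      countable_bad' u (fun t => (hud t).differentiableAt)
    have : volume {t : ℝ | ¬ (y + (LinearMap.toSpanSingleton ℝ _ v) t ∈ s)} = 0 :=
      measure_mono_null hsub (hcnt.measure_zero _)
    exact this
  exact ae_mem_of_ae_add_linearMap_mem (LinearMap.toSpanSingleton ℝ _ v) volume volume hmeas main

private lemma normsq_eq' (z : ℂ) : ‖z‖ ^ 2 = z.re * z.re + z.im * z.im := by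
  rw [Complex.sq_norm, Complex.normSq_apply]

private lemma pd_normsq' {d : ℕ} (g : EuclideanSpace ℝ (Fin d) → ℂ)
    (hg : Differentiable ℝ g) (i : Fin d) (x : EuclideanSpace ℝ (Fin d)) :
    pd i (fun z => ‖g z‖ ^ 2) x = 2 * ((starRingEnd ℂ) (g x) * pdc i g x).re := by
  have hgx := (hg x).hasFDerivAt
  have hre : HasFDerivAt (fun z => (g z).re) (Complex.reCLM.comp (fderiv ℝ g x)) x :=
    (Complex.reCLM.hasFDerivAt).comp x hgx
  have him : HasFDerivAt (fun z => (g z).im) (Complex.imCLM.comp (fderiv ℝ g x)) x :=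
    (Complex.imCLM.hasFDerivAt).comp x hgx
  have hr : HasFDerivAt (fun z => ‖g z‖ ^ 2)
      (((g x).re • (Complex.reCLM.comp (fderiv ℝ g x)) +
        (g x).re • (Complex.reCLM.comp (fderiv ℝ g x))) +
       ((g x).im • (Complex.imCLM.comp (fderiv ℝ g x)) +
        (g x).im • (Complex.imCLM.comp (fderiv ℝ g x)))) x := by
    have := (hre.mul hre).add (him.mul him)
    refine HasFDerivAt.congr_of_eventuallyEq this ?_
    filter_upwards with z using (normsq_eq' (g z))
  rw [pd, hr.fderiv]
  simp only [ContinuousLinearMap.add_apply, ContinuousLinearMap.smul_apply,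
    ContinuousLinearMap.comp_apply, Complex.reCLM_apply, Complex.imCLM_apply,
    smul_eq_mul, pdc, Complex.mul_re, Complex.conj_re, Complex.conj_im]
  ring

private lemma pd_pd_normsq' {d : ℕ} (g : EuclideanSpace ℝ (Fin d) → ℂ)
    (hg : Differentiable ℝ g) (i : Fin d)
    (hg2 : Differentiable ℝ (fun y => pdc i g y)) (x : EuclideanSpace ℝ (Fin d)) :
    pd i (fun y => pd i (fun z => ‖g z‖ ^ 2) y) x
      = 2 * Complex.normSq (pdc i g x)
        + 2 * ((starRingEnd ℂ) (g x) * pdc i (fun y => pdc i g y) x).re := by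
  set h : EuclideanSpace ℝ (Fin d) → ℂ := fun y => pdc i g y with hh
  have hgx := (hg x).hasFDerivAt
  have hhx := (hg2 x).hasFDerivAt
  have hre : HasFDerivAt (fun z => (g z).re) (Complex.reCLM.comp (fderiv ℝ g x)) x :=
    (Complex.reCLM.hasFDerivAt).comp x hgx
  have him : HasFDerivAt (fun z => (g z).im) (Complex.imCLM.comp (fderiv ℝ g x)) x :=
    (Complex.imCLM.hasFDerivAt).comp x hgx
  have hre' : HasFDerivAt (fun z => (h z).re) (Complex.reCLM.comp (fderiv ℝ h x)) x :=
    (Complex.reCLM.hasFDerivAt).comp x hhx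
  have him' : HasFDerivAt (fun z => (h z).im) (Complex.imCLM.comp (fderiv ℝ h x)) x :=
    (Complex.imCLM.hasFDerivAt).comp x hhx
  have hbig : HasFDerivAt (fun y => pd i (fun z => ‖g z‖ ^ 2) y)
      ((2 : ℝ) • ((((g x).re • (Complex.reCLM.comp (fderiv ℝ h x))
          + (h x).re • (Complex.reCLM.comp (fderiv ℝ g x)))
        + ((g x).im • (Complex.imCLM.comp (fderiv ℝ h x))
          + (h x).im • (Complex.imCLM.comp (fderiv ℝ g x)))))) x := by
    have base : HasFDerivAt
        (fun y => (g y).re * (h y).re + (g y).im * (h y).im)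
        ((((g x).re • (Complex.reCLM.comp (fderiv ℝ h x))
          + (h x).re • (Complex.reCLM.comp (fderiv ℝ g x)))
        + ((g x).im • (Complex.imCLM.comp (fderiv ℝ h x))
          + (h x).im • (Complex.imCLM.comp (fderiv ℝ g x))))) x :=
      (hre.mul hre').add (him.mul him')
    have := base.const_smul (2 : ℝ)
    refine HasFDerivAt.congr_of_eventuallyEq this ?_
    filter_upwards with y
    rw [pd_normsq' g hg i y]
    simp only [Pi.smul_apply, smul_eq_mul, Complex.mul_re, Complex.conj_re, Complex.conj_im, hh]
    ring
  rw [pd, hbig.fderiv]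
  simp only [ContinuousLinearMap.smul_apply, ContinuousLinearMap.add_apply,
    ContinuousLinearMap.comp_apply, Complex.reCLM_apply, Complex.imCLM_apply,
    smul_eq_mul, Complex.normSq_apply, Complex.mul_re, Complex.conj_re, Complex.conj_im]
  have e1 : (fderiv ℝ g x) (EuclideanSpace.single i 1) = h x := rfl
  rw [e1]
  have e2 : (fderiv ℝ h x) (EuclideanSpace.single i 1) = pdc i (fun y => pdc i g y) x := rfl
  rw [e2]
  ring

/-- For a solution `ψ` of the NLS equation `i∂_tψ = −(1/2)Δψ + f'(|ψ|²)ψ`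
with polar factor `φ`, setting `λ := −Im(φ̄∂_tψ)`, one has a.e.
`√ρ λ = −Im(ψ̄∂_tψ) = −(1/4)Δρ + e + p(ρ)` where `ρ = |ψ|²`,
`e = (1/2)|∇√ρ|² + (1/2)|Λ|² + f(ρ)`, `∇√ρ = Re(φ̄∇ψ)`, `Λ = Im(φ̄∇ψ)` and
`p(ρ) = ρf'(ρ) − f(ρ)`. -/
theorem nls_chemical_potential_identity {d : ℕ}
    (f : ℝ → ℝ) (hf : ContDiff ℝ (⊤ : ℕ∞) f)
    (ψ : ℝ → EuclideanSpace ℝ (Fin d) → ℂ) (t : ℝ)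
    (ψt : EuclideanSpace ℝ (Fin d) → ℂ)
    (hψt : ∀ x, HasDerivAt (fun s => ψ s x) (ψt x) t)
    (hψdiff : Differentiable ℝ (ψ t))
    (hψ2diff : ∀ i : Fin d, Differentiable ℝ (fun x => pdc i (ψ t) x))
    (hψL2 : MemLp (ψ t) 2 volume)
    (hgradL2 : MemLp (fun x => fderiv ℝ (ψ t) x) 2 volume)
    (hhessL2 : ∀ i : Fin d, MemLp (fun x => fderiv ℝ (fun y => pdc i (ψ t) y) x) 2 volume)
    -- the NLS equation at time t
    (hNLS : ∀ x, Complex.I * ψt x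
      = -(1/2) * ∑ i, pdc i (fun y => pdc i (ψ t) y) x
        + (Complex.ofReal (deriv f (‖ψ t x‖ ^ 2))) * ψ t x)
    (φ : EuclideanSpace ℝ (Fin d) → ℂ)
    (hφ : ∀ᵐ x ∂volume, ‖φ x‖ ≤ 1)
    (hpolar : ∀ᵐ x ∂volume, (‖ψ t x‖ : ℂ) * φ x = ψ t x) :
    ∀ᵐ x ∂volume,
      ‖ψ t x‖ * (-((starRingEnd ℂ) (φ x) * ψt x).im)
        = -((starRingEnd ℂ) (ψ t x) * ψt x).im
      ∧ ‖ψ t x‖ * (-((starRingEnd ℂ) (φ x) * ψt x).im)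
        = -(1/4) * (∑ i, pd i (fun y => pd i (fun z => ‖ψ t z‖ ^ 2) y) x)
          + ((1/2) * ∑ i, (((starRingEnd ℂ) (φ x) * pdc i (ψ t) x).re) ^ 2
            + (1/2) * ∑ i, (((starRingEnd ℂ) (φ x) * pdc i (ψ t) x).im) ^ 2
            + f (‖ψ t x‖ ^ 2))
          + (‖ψ t x‖ ^ 2 * deriv f (‖ψ t x‖ ^ 2) - f (‖ψ t x‖ ^ 2)) := by
  have hlevel : ∀ᵐ x ∂(volume : Measure (EuclideanSpace ℝ (Fin d))),
      ∀ i : Fin d, ψ t x = 0 → pdc i (ψ t) x = 0 :=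
    ae_all_iff.mpr (fun i => ae_pdc_zero' (ψ t) hψdiff i)
  filter_upwards [hφ, hpolar, hlevel] with x hφx hpol hlev
  set Ψ : ℂ := ψ t x with hΨ
  -- step 1: the NLS energy identity (pointwise)
  have key : -((starRingEnd ℂ) Ψ * ψt x).im
      = -(1/4) * (∑ i, pd i (fun y => pd i (fun z => ‖ψ t z‖ ^ 2) y) x)
        + (1/2) * ∑ i, Complex.normSq (pdc i (ψ t) x)
        + ‖Ψ‖ ^ 2 * deriv f (‖Ψ‖ ^ 2) := by
    set S : ℂ := ∑ i, pdc i (fun y => pdc i (ψ t) y) x with hSdef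
    have h1 : ψt x = -Complex.I * (-(1/2) * S
        + (Complex.ofReal (deriv f (‖Ψ‖ ^ 2))) * Ψ) := by
      rw [← hNLS x]
      rw [show -Complex.I * (Complex.I * ψt x) = -(Complex.I * Complex.I) * ψt x by ring,
        Complex.I_mul_I]
      ring
    have hsum_re : ((starRingEnd ℂ) Ψ * S).re
        = ∑ i, ((starRingEnd ℂ) Ψ * pdc i (fun y => pdc i (ψ t) y) x).re := by
      rw [hSdef, Finset.mul_sum, Complex.re_sum]
    have hper : ∀ i : Fin d, ((starRingEnd ℂ) Ψ * pdc i (fun y => pdc i (ψ t) y) x).re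
        = (1/2) * pd i (fun y => pd i (fun z => ‖ψ t z‖ ^ 2) y) x
          - Complex.normSq (pdc i (ψ t) x) := by
      intro i
      have := pd_pd_normsq' (ψ t) hψdiff i (hψ2diff i) x
      linarith
    have hre : -((starRingEnd ℂ) Ψ * ψt x).im
        = -(1/2) * ((starRingEnd ℂ) Ψ * S).re + ‖Ψ‖ ^ 2 * deriv f (‖Ψ‖ ^ 2) := by
      rw [h1, normsq_eq' Ψ]
      simp only [Complex.mul_im, Complex.mul_re, Complex.add_re, Complex.add_im,
        Complex.neg_re, Complex.neg_im, Complex.I_re, Complex.I_im,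
        Complex.ofReal_re, Complex.ofReal_im, Complex.conj_re, Complex.conj_im,
        Complex.mul_re, Complex.mul_im]
      push_cast
      ring_nf
      norm_num
      ring
    rw [hre, hsum_re, Finset.mul_sum]
    have expand : ∑ i : Fin d,
        -(1/2 : ℝ) * ((starRingEnd ℂ) Ψ * pdc i (fun y => pdc i (ψ t) y) x).re
        = -(1/4) * (∑ i, pd i (fun y => pd i (fun z => ‖ψ t z‖ ^ 2) y) x)
          + (1/2) * ∑ i, Complex.normSq (pdc i (ψ t) x) := by
      rw [Finset.mul_sum, Finset.mul_sum, ← Finset.sum_add_distrib]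
      refine Finset.sum_congr rfl (fun i _ => ?_)
      have := hper i
      linarith
    rw [expand]
  -- step 2: polar factorization consequences
  have first : ‖Ψ‖ * (-((starRingEnd ℂ) (φ x) * ψt x).im)
      = -((starRingEnd ℂ) Ψ * ψt x).im := by
    have : (starRingEnd ℂ) Ψ * ψt x
        = (‖Ψ‖ : ℂ) * ((starRingEnd ℂ) (φ x) * ψt x) := by
      conv_lhs => rw [← hpol]
      simp [map_mul, Complex.conj_ofReal, mul_assoc]
    rw [this]
    simp [Complex.mul_im, Complex.ofReal_re, Complex.ofReal_im]
    ring
  have hb : ∀ i : Fin d,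
      (((starRingEnd ℂ) (φ x) * pdc i (ψ t) x).re) ^ 2
        + (((starRingEnd ℂ) (φ x) * pdc i (ψ t) x).im) ^ 2
      = Complex.normSq (pdc i (ψ t) x) := by
    intro i
    by_cases hΨ0 : Ψ = 0
    · have h0 : pdc i (ψ t) x = 0 := hlev i hΨ0
      simp [h0]
    · have hnorm : ‖φ x‖ = 1 := by
        have hne : ‖Ψ‖ ≠ 0 := norm_ne_zero_iff.mpr hΨ0
        have habs : ‖Ψ‖ * ‖φ x‖ = ‖Ψ‖ * 1 := by
          rw [mul_one]
          calc ‖Ψ‖ * ‖φ x‖ = ‖((‖Ψ‖ : ℂ) * φ x)‖ := by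
                rw [norm_mul, Complex.norm_real, norm_norm]
            _ = ‖Ψ‖ := by rw [hpol]
        exact mul_left_cancel₀ hne habs
      have : (((starRingEnd ℂ) (φ x) * pdc i (ψ t) x).re) ^ 2
          + (((starRingEnd ℂ) (φ x) * pdc i (ψ t) x).im) ^ 2
          = Complex.normSq ((starRingEnd ℂ) (φ x) * pdc i (ψ t) x) := by
        rw [Complex.normSq_apply]; ring
      rw [this, Complex.normSq_mul, Complex.normSq_conj,
        Complex.normSq_eq_norm_sq, hnorm]
      norm_num
  refine ⟨first, ?_⟩
  rw [first, key]
  have hsums : (1/2) * ∑ i, (((starRingEnd ℂ) (φ x) * pdc i (ψ t) x).re) ^ 2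
      + (1/2) * ∑ i, (((starRingEnd ℂ) (φ x) * pdc i (ψ t) x).im) ^ 2
      = (1/2) * ∑ i, Complex.normSq (pdc i (ψ t) x) := by
    rw [← Finset.sum_congr rfl (fun i _ => hb i)]
    rw [Finset.sum_add_distrib]
    ring
  linarith [hsums]

end
end
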